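/- arXiv:2004.09641 — 2 statements merged into one kernel-verified Lean document; each statement's English description precedes it below -/
import Mathlib

section
/- Let G be a finite group and D : G → GL(N,ℝ) the block-diagonal representation built from Σ₁,…,Σ_s with multiplicities m₁,…,m_s as in the context, with every matrix Σᵢ(g) orthogonal. Then every real symmetric N×N matrix Q satisfying D(g)ᵀQD(g) = Q for all g ∈ G has the block structure in which the block of Q joining copy k of Σᵢ to copy l of Σⱼ is zero for i ≠ j and equals (Mᵢ)_{kl}·I_{nᵢ} for i = j, where Mᵢ is a symmetric mᵢ×mᵢ real matrix; moreover Q is positive semidefinite if and only if every Mᵢ (i = 1,…,s) is positive semidefinite. -/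
/-!
Since every `Σᵢ(g)` is orthogonal, so is `D(g)`, and invariance `D(g)ᵀ Q D(g) = Q` becomes
`D(g) Q = Q D(g)`. Reading this block by block, the `nᵢ × nⱼ` block of `Q` joining copy `k` of
`Σᵢ` to copy `l` of `Σⱼ` intertwines `Σᵢ` with `Σⱼ`, so by Schur's lemma it vanishes for `i ≠ j`
and is a scalar `(Mᵢ)ₖₗ • 1` for `i = j`. Thus `Q = ⊕ᵢ (1 ⊗ Mᵢ)`, which is positive semidefinite
exactly when every `Mᵢ` is: one direction is the Kronecker product of positive semidefinite
matrices, the other holds because `Mᵢ` is an average of principal submatrices of `Q`.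
-/

open Matrix
open scoped Kronecker ComplexOrder

namespace Matrix

section BlockDiagonal

variable {ι R : Type*} [Fintype ι] [DecidableEq ι] {p : ι → Type*} [∀ i, Fintype (p i)]

theorem blockDiagonal'_mul_apply [NonUnitalNonAssocSemiring R] {o : Type*}
    (B : ∀ i, Matrix (p i) (p i) R) (Q : Matrix (Σ i, p i) o R) (i : ι) (a : p i) (c : o) :
    (blockDiagonal' B * Q) ⟨i, a⟩ c = ∑ b, B i a b * Q ⟨i, b⟩ c := by
  rw [mul_apply, Fintype.sum_sigma, Finset.sum_eq_single i]
  · simp only [blockDiagonal'_apply_eq]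
  · intro j _ hj
    exact Finset.sum_eq_zero fun b _ => by rw [blockDiagonal'_apply_ne _ _ _ hj.symm, zero_mul]
  · simp

theorem mul_blockDiagonal'_apply [NonUnitalNonAssocSemiring R] {o : Type*}
    (Q : Matrix o (Σ i, p i) R) (B : ∀ i, Matrix (p i) (p i) R) (c : o) (j : ι) (b : p j) :
    (Q * blockDiagonal' B) c ⟨j, b⟩ = ∑ a, Q c ⟨j, a⟩ * B j a b := by
  rw [mul_apply, Fintype.sum_sigma, Finset.sum_eq_single j]
  · simp only [blockDiagonal'_apply_eq]
  · intro i _ hi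
    exact Finset.sum_eq_zero fun a _ => by rw [blockDiagonal'_apply_ne _ _ _ hi, mul_zero]
  · simp

theorem blockDiagonal'_mulVec_apply [NonUnitalNonAssocSemiring R]
    (B : ∀ i, Matrix (p i) (p i) R) (x : (Σ i, p i) → R) (i : ι) (a : p i) :
    (blockDiagonal' B *ᵥ x) ⟨i, a⟩ = (B i *ᵥ fun b => x ⟨i, b⟩) a := by
  rw [mulVec, dotProduct, Fintype.sum_sigma, Finset.sum_eq_single i]
  · simp only [blockDiagonal'_apply_eq]
    rfl
  · intro j _ hj
    exact Finset.sum_eq_zero fun b _ => by rw [blockDiagonal'_apply_ne _ _ _ hj.symm, zero_mul]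
  · simp

theorem PosSemidef.blockDiagonal' [CommRing R] [PartialOrder R] [StarRing R]
    [IsOrderedAddMonoid R] {B : ∀ i, Matrix (p i) (p i) R} (hB : ∀ i, (B i).PosSemidef) :
    (Matrix.blockDiagonal' B).PosSemidef := by
  refine .of_dotProduct_mulVec_nonneg ?_ fun x => ?_
  · rw [IsHermitian, blockDiagonal'_conjTranspose]
    simp only [(hB _).isHermitian.eq]
  · have hsplit : star x ⬝ᵥ (Matrix.blockDiagonal' B *ᵥ x) =
        ∑ i, star (fun b => x ⟨i, b⟩) ⬝ᵥ (B i *ᵥ fun b => x ⟨i, b⟩) := by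
      simp only [dotProduct, Fintype.sum_sigma, blockDiagonal'_mulVec_apply]
      rfl
    rw [hsplit]
    exact Finset.sum_nonneg fun i _ => (hB i).dotProduct_mulVec_nonneg _

end BlockDiagonal

theorem commute_of_transpose_mul_mul_eq {R o : Type*} [CommRing R] [Fintype o]
    [DecidableEq o] {A Q : Matrix o o R} (hA : Aᵀ * A = 1) (hQ : Aᵀ * Q * A = Q) :
    Commute A Q := by
  have hA' : A * Aᵀ = 1 := mul_eq_one_comm.mp hA
  calc A * Q = A * (Aᵀ * Q * A) := by rw [hQ]
    _ = Q * A := by rw [← mul_assoc, ← mul_assoc, hA', one_mul]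

section Isotypic

variable {ι R : Type*} {n m : ι → Type*}

def isotypicBlock (Q : Matrix (Σ i, n i × m i) (Σ i, n i × m i) R) (i j : ι) (k : m i)
    (l : m j) : Matrix (n i) (n j) R :=
  Q.submatrix (fun t => ⟨i, (t, k)⟩) (fun u => ⟨j, (u, l)⟩)

variable [∀ i, Fintype (n i)]

/-- When `n i` is empty the normalizing factor is `0⁻¹ = 0`, which makes this `0` and keeps it
positive semidefinite. -/
def multiplicityMatrix [Field R] (Q : Matrix (Σ i, n i × m i) (Σ i, n i × m i) R) (i : ι) :
    Matrix (m i) (m i) R :=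
  (Fintype.card (n i) : R)⁻¹ • ∑ t, Q.submatrix (fun k => ⟨i, (t, k)⟩) (fun l => ⟨i, (t, l)⟩)

theorem multiplicityMatrix_apply [Field R] (Q : Matrix (Σ i, n i × m i) (Σ i, n i × m i) R)
    (i : ι) (k l : m i) :
    multiplicityMatrix Q i k l =
      (Fintype.card (n i) : R)⁻¹ * (isotypicBlock Q i i k l).trace := by
  simp [multiplicityMatrix, isotypicBlock, trace, Matrix.sum_apply]

theorem multiplicityMatrix_apply_of_isotypicBlock_eq_smul_one [Field R] [CharZero R]
    [∀ i, DecidableEq (n i)] {Q : Matrix (Σ i, n i × m i) (Σ i, n i × m i) R} {i : ι}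
    [Nonempty (n i)] {k l : m i} {c : R} (hc : isotypicBlock Q i i k l = c • 1) :
    multiplicityMatrix Q i k l = c := by
  rw [multiplicityMatrix_apply, hc, trace_smul, trace_one, smul_eq_mul, mul_comm c,
    inv_mul_cancel_left₀ (by exact_mod_cast Fintype.card_ne_zero)]

theorem IsSymm.multiplicityMatrix [Field R] {Q : Matrix (Σ i, n i × m i) (Σ i, n i × m i) R}
    (hQ : Q.IsSymm) (i : ι) : (multiplicityMatrix Q i).IsSymm := by
  simp only [IsSymm, Matrix.multiplicityMatrix, transpose_smul, transpose_sum, transpose_submatrix,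
    hQ.eq]

theorem PosSemidef.multiplicityMatrix {𝕜 : Type*} [RCLike 𝕜]
    {Q : Matrix (Σ i, n i × m i) (Σ i, n i × m i) 𝕜} (hQ : Q.PosSemidef) (i : ι) :
    (multiplicityMatrix Q i).PosSemidef :=
  (posSemidef_sum _ fun _ _ => hQ.submatrix _).smul (by positivity)

theorem eq_blockDiagonal'_one_kronecker_multiplicityMatrix [DecidableEq ι] [Field R] [CharZero R]
    [∀ i, DecidableEq (n i)] {Q : Matrix (Σ i, n i × m i) (Σ i, n i × m i) R}
    (hoff : ∀ i j, i ≠ j → ∀ k l, isotypicBlock Q i j k l = 0)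
    (hdiag : ∀ i k l, ∃ c : R, isotypicBlock Q i i k l = c • 1) :
    Q = blockDiagonal' fun i => (1 : Matrix (n i) (n i) R) ⊗ₖ multiplicityMatrix Q i := by
  ext ⟨i, t, k⟩ ⟨j, u, l⟩
  rcases eq_or_ne i j with rfl | hij
  · obtain ⟨c, hc⟩ := hdiag i k l
    have : Nonempty (n i) := ⟨t⟩
    rw [blockDiagonal'_apply_eq, kroneckerMap_apply,
      multiplicityMatrix_apply_of_isotypicBlock_eq_smul_one hc]
    simpa [isotypicBlock, one_apply] using congr_fun₂ hc t u
  · rw [blockDiagonal'_apply_ne _ _ _ hij]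
    exact congr_fun₂ (hoff i j hij k l) t u

variable [Fintype ι] [DecidableEq ι] [∀ i, Fintype (m i)] [∀ i, DecidableEq (m i)]

theorem isotypicBlock_blockDiagonal'_mul [NonUnitalNonAssocSemiring R]
    (S : ∀ i, Matrix (n i) (n i) R) (Q : Matrix (Σ i, n i × m i) (Σ i, n i × m i) R)
    (i j : ι) (k : m i) (l : m j) :
    isotypicBlock (blockDiagonal' (fun i => blockDiagonal fun _ : m i => S i) * Q) i j k l =
      S i * isotypicBlock Q i j k l := by
  ext t u
  simp only [isotypicBlock, submatrix_apply]
  rw [blockDiagonal'_mul_apply, mul_apply]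
  simp [Fintype.sum_prod_type, blockDiagonal_apply]

theorem isotypicBlock_mul_blockDiagonal' [NonUnitalNonAssocSemiring R]
    (Q : Matrix (Σ i, n i × m i) (Σ i, n i × m i) R) (S : ∀ i, Matrix (n i) (n i) R)
    (i j : ι) (k : m i) (l : m j) :
    isotypicBlock (Q * blockDiagonal' (fun i => blockDiagonal fun _ : m i => S i)) i j k l =
      isotypicBlock Q i j k l * S j := by
  ext t u
  simp only [isotypicBlock, submatrix_apply]
  rw [mul_blockDiagonal'_apply, mul_apply]
  simp [Fintype.sum_prod_type, blockDiagonal_apply]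

theorem isotypicBlock_intertwines_of_commute [NonUnitalNonAssocSemiring R]
    {S : ∀ i, Matrix (n i) (n i) R} {Q : Matrix (Σ i, n i × m i) (Σ i, n i × m i) R}
    (hQ : Commute (blockDiagonal' fun i => blockDiagonal fun _ : m i => S i) Q)
    (i j : ι) (k : m i) (l : m j) :
    S i * isotypicBlock Q i j k l = isotypicBlock Q i j k l * S j := by
  rw [← isotypicBlock_blockDiagonal'_mul, hQ.eq, isotypicBlock_mul_blockDiagonal']

theorem blockDiagonal'_blockDiagonal_transpose_mul_self [NonAssocSemiring R]
    [∀ i, DecidableEq (n i)] {S : ∀ i, Matrix (n i) (n i) R} (hS : ∀ i, (S i)ᵀ * S i = 1) :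
    (blockDiagonal' fun i => blockDiagonal fun _ : m i => S i)ᵀ *
      (blockDiagonal' fun i => blockDiagonal fun _ : m i => S i) = 1 := by
  have hblock (i : ι) :
      (blockDiagonal fun _ : m i => S i)ᵀ * blockDiagonal (fun _ : m i => S i) = 1 := by
    rw [blockDiagonal_transpose, ← blockDiagonal_mul]
    simp only [hS]
    exact blockDiagonal_one
  rw [blockDiagonal'_transpose, ← blockDiagonal'_mul]
  simp only [hblock]
  exact blockDiagonal'_one

end Isotypic

end Matrix

theorem stmt_2_general
    (G : Type*)
    (s : ℕ)
    (n m : Fin s → ℕ)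
    (Sig : ∀ i : Fin s, G → Matrix (Fin (n i)) (Fin (n i)) ℝ)
    (hSigOrth : ∀ i g, (Sig i g)ᵀ * Sig i g = 1)
    (hSchurDiag : ∀ (i : Fin s) (M : Matrix (Fin (n i)) (Fin (n i)) ℝ),
      (∀ g, Sig i g * M = M * Sig i g) →
        ∃ c : ℝ, M = c • (1 : Matrix (Fin (n i)) (Fin (n i)) ℝ))
    (hSchurOff : ∀ (i j : Fin s), i ≠ j → ∀ M : Matrix (Fin (n i)) (Fin (n j)) ℝ,
      (∀ g, Sig i g * M = M * Sig j g) → M = 0)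
    (D : G → Matrix (Σ i : Fin s, Fin (n i) × Fin (m i)) (Σ i : Fin s, Fin (n i) × Fin (m i)) ℝ)
    (hD : ∀ g, D g = Matrix.blockDiagonal'
      (fun i => Matrix.blockDiagonal (fun _ : Fin (m i) => Sig i g)))
    (Q : Matrix (Σ i : Fin s, Fin (n i) × Fin (m i)) (Σ i : Fin s, Fin (n i) × Fin (m i)) ℝ)
    (hQsymm : Q.IsSymm)
    (hQinv : ∀ g, (D g)ᵀ * Q * D g = Q) :
    ∃ M : ∀ i : Fin s, Matrix (Fin (m i)) (Fin (m i)) ℝ,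
      (∀ i, (M i).IsSymm) ∧
      (∀ (i j : Fin s), i ≠ j →
        ∀ (t : Fin (n i)) (k : Fin (m i)) (u : Fin (n j)) (l : Fin (m j)),
          Q ⟨i, (t, k)⟩ ⟨j, (u, l)⟩ = 0) ∧
      (∀ (i : Fin s) (t : Fin (n i)) (k : Fin (m i)) (u : Fin (n i)) (l : Fin (m i)),
        Q ⟨i, (t, k)⟩ ⟨i, (u, l)⟩ = if t = u then M i k l else 0) ∧
      (Q.PosSemidef ↔ ∀ i, (M i).PosSemidef) := by
  have hcomm (g : G) : Commute (D g) Q := by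
    refine commute_of_transpose_mul_mul_eq ?_ (hQinv g)
    rw [hD g]
    exact blockDiagonal'_blockDiagonal_transpose_mul_self (hSigOrth · g)
  have hintertwine (i j k l g) := isotypicBlock_intertwines_of_commute (hD g ▸ hcomm g) i j k l
  have hoff (i j) (hij : i ≠ j) (k l) : isotypicBlock Q i j k l = 0 :=
    hSchurOff i j hij _ (hintertwine i j k l)
  have hQ : Q = blockDiagonal' fun i => 1 ⊗ₖ multiplicityMatrix Q i :=
    eq_blockDiagonal'_one_kronecker_multiplicityMatrix hoff fun i k l =>
      hSchurDiag i _ (hintertwine i i k l)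
  refine ⟨multiplicityMatrix Q, hQsymm.multiplicityMatrix,
    fun i j hij t k u l => congr_fun₂ (hoff i j hij k l) t u, fun i t k u l => ?_,
    fun h => h.multiplicityMatrix, fun h => ?_⟩
  · rw [congr_fun₂ hQ, blockDiagonal'_apply_eq, kroneckerMap_apply, one_apply]
    split_ifs <;> simp
  · rw [hQ]
    exact PosSemidef.blockDiagonal' fun i => PosSemidef.one.kronecker (h i)

/-- Corollary 2.5. With all `Σᵢ(g)` orthogonal, every symmetric `Q`
with `D(g)ᵀ Q D(g) = Q` for all `g` has block structure `diag` of scalar blocks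
`(Mᵢ)_{kl} • I_{nᵢ}` with `Mᵢ` symmetric, vanishing between distinct isotypic
components; and `Q` is PSD iff every `Mᵢ` is PSD. -/
theorem stmt_2
    (G : Type*) [Group G] [Finite G]
    (s : ℕ) (hs : 1 ≤ s)
    (n m : Fin s → ℕ)
    (Sig : ∀ i : Fin s, G → Matrix (Fin (n i)) (Fin (n i)) ℝ)
    (hSigOne : ∀ i, Sig i 1 = 1)
    (hSigMul : ∀ i g h, Sig i (g * h) = Sig i g * Sig i h)
    (hSigOrth : ∀ i g, (Sig i g)ᵀ * Sig i g = 1)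
    (hSchurDiag : ∀ (i : Fin s) (M : Matrix (Fin (n i)) (Fin (n i)) ℝ),
      (∀ g, Sig i g * M = M * Sig i g) →
        ∃ c : ℝ, M = c • (1 : Matrix (Fin (n i)) (Fin (n i)) ℝ))
    (hSchurOff : ∀ (i j : Fin s), i ≠ j → ∀ M : Matrix (Fin (n i)) (Fin (n j)) ℝ,
      (∀ g, Sig i g * M = M * Sig j g) → M = 0)
    (D : G → Matrix (Σ i : Fin s, Fin (n i) × Fin (m i)) (Σ i : Fin s, Fin (n i) × Fin (m i)) ℝ)
    (hD : ∀ g, D g = Matrix.blockDiagonal'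
      (fun i => Matrix.blockDiagonal (fun _ : Fin (m i) => Sig i g)))
    (Q : Matrix (Σ i : Fin s, Fin (n i) × Fin (m i)) (Σ i : Fin s, Fin (n i) × Fin (m i)) ℝ)
    (hQsymm : Q.IsSymm)
    (hQinv : ∀ g, (D g)ᵀ * Q * D g = Q) :
    ∃ M : ∀ i : Fin s, Matrix (Fin (m i)) (Fin (m i)) ℝ,
      (∀ i, (M i).IsSymm) ∧
      (∀ (i j : Fin s), i ≠ j →
        ∀ (t : Fin (n i)) (k : Fin (m i)) (u : Fin (n j)) (l : Fin (m j)),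
          Q ⟨i, (t, k)⟩ ⟨j, (u, l)⟩ = 0) ∧
      (∀ (i : Fin s) (t : Fin (n i)) (k : Fin (m i)) (u : Fin (n i)) (l : Fin (m i)),
        Q ⟨i, (t, k)⟩ ⟨i, (u, l)⟩ = if t = u then M i k l else 0) ∧
      (Q.PosSemidef ↔ ∀ i, (M i).PosSemidef) :=
  stmt_2_general G s n m Sig hSigOrth hSchurDiag hSchurOff D hD Q hQsymm hQinv
end

section
/- Let a, b, c, d ∈ ℝ and let f = a·Σᵢxᵢ⁴ + b·Σ_{i≠j}xᵢ³xⱼ + c·Σ_{i<j}xᵢ²xⱼ² + d·(x₁²x₂x₃ + x₂²x₁x₃ + x₃²x₁x₂) ∈ ℝ[x₁,x₂,x₃] be a symmetric ternary quartic. Then f is a sum of squares of real polynomials if and only if there exist u, v ∈ ℝ such that both 2×2 matrices [[a+2u, b+v],[b+v, c+d−2u−2v]] and [[a−u, b/2−v],[b/2−v, c−d/2−2u+v]] are positive semidefinite. -/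
/-!
If `f = ∑ qᵢ²` is a form of degree 4, restricting to the lines `t ↦ t • x` shows that every `qᵢ`
is a quadratic form, so `f = mᵀ G m` for the vector `m` of degree-2 monomials and the positive
semidefinite Gram matrix `G = ∑ cᵢ cᵢᵀ` of the coefficient vectors. Compressing `G` to the
symmetry-adapted basis of the trivial isotypic component, and to that of the standard one summed
over its three cyclic shifts, gives positive semidefinite `2 × 2` matrices; the linear relations
that `f = mᵀ G m` imposes on `G` identify them with the two blocks, `u` and `v` being `S₃`-averaged
entries of `G`. Conversely, writing each block divided by `3` as `Bᵀ B` turns the identity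
`f = pᵀ M₁ p / 3 + ∑ᵣ sᵣᵀ M₂ sᵣ / 3` in the symmetry-adapted quadratic forms `p`, `sᵣ`, valid for
all `u, v`, into an explicit sum of eight squares.
-/

open Matrix MvPolynomial

namespace Polynomial

variable {R ι : Type*} [CommRing R] [LinearOrder R] [IsStrictOrderedRing R]

theorem X_pow_dvd_of_X_pow_two_mul_dvd_sum_sq {s : Finset ι} {g : ι → R[X]} {n : ℕ}
    (h : X ^ (2 * n) ∣ ∑ i ∈ s, g i ^ 2) : ∀ i ∈ s, X ^ n ∣ g i := by
  induction n generalizing g with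
  | zero => simp
  | succ n ih =>
    have hcoeff : ∀ i ∈ s, (g i).coeff 0 = 0 := by
      have h0 : (∑ i ∈ s, g i ^ 2).coeff 0 = 0 :=
        X_dvd_iff.mp ((dvd_pow_self X (by omega)).trans h)
      simp only [finsetSum_coeff, sq, mul_coeff_zero] at h0
      exact (Finset.sum_mul_self_eq_zero_iff _ _).mp h0
    have hg : ∀ i ∈ s, g i = X * divX (g i) := fun i hi => by
      simpa [hcoeff i hi] using (X_mul_divX_add (g i)).symm
    have hdiv : X ^ (2 * n) ∣ ∑ i ∈ s, divX (g i) ^ 2 := by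
      refine (mul_dvd_mul_iff_left (pow_ne_zero 2 (X_ne_zero (R := R)))).mp ?_
      rw [Finset.mul_sum, ← pow_add, show 2 + 2 * n = 2 * (n + 1) by ring]
      convert h using 1
      exact Finset.sum_congr rfl fun i hi => by rw [← mul_pow, ← hg i hi]
    intro i hi
    rw [hg i hi, pow_succ']
    exact mul_dvd_mul_left X (ih hdiv i hi)

theorem natDegree_le_of_natDegree_sum_sq_le {s : Finset ι} {g : ι → R[X]} {n : ℕ}
    (h : (∑ i ∈ s, g i ^ 2).natDegree ≤ 2 * n) : ∀ i ∈ s, (g i).natDegree ≤ n := by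
  by_contra! ⟨i, hi, hn⟩
  obtain ⟨j, hj, hjD⟩ := Finset.exists_mem_eq_sup s ⟨i, hi⟩ fun i => (g i).natDegree
  set D := s.sup fun i => (g i).natDegree
  have hD : ∀ k ∈ s, (g k).natDegree ≤ D := fun k hk =>
    Finset.le_sup (f := fun i => (g i).natDegree) hk
  -- The coefficient of `X ^ (2 * D)` in `∑ gₖ²` is `∑ (gₖ.coeff D)²`, and it vanishes.
  have htop : ∀ k ∈ s, (g k).coeff D = 0 := by
    have h0 : (∑ k ∈ s, g k ^ 2).coeff (2 * D) = 0 :=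
      coeff_eq_zero_of_natDegree_lt (by have := hD i hi; omega)
    rw [finsetSum_coeff, Finset.sum_congr rfl fun k hk => coeff_pow_of_natDegree_le (hD k hk)] at h0
    simpa using (Finset.sum_eq_zero_iff_of_nonneg fun k _ => sq_nonneg ((g k).coeff D)).mp h0
  have hgj : g j = 0 := leadingCoeff_eq_zero.mp (by rw [leadingCoeff, ← hjD]; exact htop j hj)
  rw [hgj, natDegree_zero] at hjD
  have := hD i hi
  omega

theorem coeff_eq_zero_of_sum_sq_eq_C_mul_X_pow {s : Finset ι} {g : ι → R[X]} {r : R} {n : ℕ}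
    (h : ∑ i ∈ s, g i ^ 2 = C r * X ^ (2 * n)) {i : ι} (hi : i ∈ s) {m : ℕ} (hm : m ≠ n) :
    (g i).coeff m = 0 := by
  rcases hm.lt_or_gt with hlt | hgt
  · exact X_pow_dvd_iff.mp (X_pow_dvd_of_X_pow_two_mul_dvd_sum_sq (h ▸ dvd_mul_left _ _) i hi) m hlt
  · exact coeff_eq_zero_of_natDegree_lt
      ((natDegree_le_of_natDegree_sum_sq_le (h ▸ natDegree_C_mul_X_pow_le r _) i hi).trans_lt hgt)

end Polynomial

namespace MvPolynomial

variable {σ R : Type*}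

open Polynomial in
theorem coeff_aeval_C_mul_X [CommSemiring R] (x : σ → R) (p : MvPolynomial σ R) (n : ℕ) :
    (aeval (fun j => Polynomial.C (x j) * Polynomial.X) p).coeff n =
      eval x (homogeneousComponent n p) := by
  induction p using MvPolynomial.induction_on' with
  | monomial d a =>
    rw [homogeneousComponent_of_mem (isHomogeneous_monomial a rfl), aeval_monomial]
    simp only [mul_pow, ← Polynomial.C_pow, Finsupp.prod_mul, ← map_finsuppProd]
    have hX : (d.prod fun _ e => (Polynomial.X : R[X]) ^ e) = Polynomial.X ^ d.degree :=
      Finset.prod_pow_eq_pow_sum _ _ _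
    rw [hX, Polynomial.algebraMap_eq, ← mul_assoc, ← Polynomial.C_mul, Polynomial.coeff_C_mul_X_pow]
    split_ifs <;> simp [eval_monomial]
  | add p q hp hq => simp [hp, hq]

theorem IsHomogeneous.of_sum_sq [CommRing R] [LinearOrder R] [IsStrictOrderedRing R] {ι : Type*}
    {s : Finset ι} {q : ι → MvPolynomial σ R} {n : ℕ}
    (h : (∑ i ∈ s, q i ^ 2).IsHomogeneous (2 * n)) : ∀ i ∈ s, (q i).IsHomogeneous n := by
  have hray : ∀ x : σ → R,
      ∑ i ∈ s, (MvPolynomial.aeval fun j => Polynomial.C (x j) * Polynomial.X) (q i) ^ 2 =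
        Polynomial.C (eval x (∑ i ∈ s, q i ^ 2)) * Polynomial.X ^ (2 * n) := by
    intro x
    ext m
    simp only [← map_pow, ← map_sum, coeff_aeval_C_mul_X, Polynomial.coeff_C_mul_X_pow,
      homogeneousComponent_of_mem h]
    split_ifs <;> simp
  intro i hi d hd
  by_contra hne
  rw [Pi.one_def, ← Finsupp.degree_eq_weight_one] at hne
  have hzero : homogeneousComponent d.degree (q i) = 0 := MvPolynomial.funext fun x => by
    rw [← coeff_aeval_C_mul_X, Polynomial.coeff_eq_zero_of_sum_sq_eq_C_mul_X_pow (hray x) hi hne,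
      map_zero]
  apply hd
  simpa [coeff_homogeneousComponent] using congrArg (coeff d) hzero

theorem IsHomogeneous.exists_eval_eq_dotProduct_mulVec [CommSemiring R] [Fintype σ]
    {q : MvPolynomial σ R} (hq : q.IsHomogeneous 2) :
    ∃ S : Matrix σ σ R, ∀ x, eval x q = x ⬝ᵥ S *ᵥ x := by
  have hmem : q ∈ homogeneousSubmodule σ R 1 * homogeneousSubmodule σ R 1 := by
    rw [← pow_two, homogeneousSubmodule_one_pow]
    exact hq
  refine Submodule.mul_induction_on hmem (fun m hm m' hm' => ?_) fun p p' ⟨S, hS⟩ ⟨S', hS'⟩ =>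
    ⟨S + S', fun x => by simp [hS, hS', Matrix.add_mulVec]⟩
  rw [homogeneousSubmodule_one_eq_span_X, Submodule.mem_span_range_iff_exists_fun] at hm hm'
  obtain ⟨c, rfl⟩ := hm
  obtain ⟨c', rfl⟩ := hm'
  refine ⟨vecMulVec c c', fun x => ?_⟩
  simp only [map_mul, map_sum, smul_eval, eval_X, vecMulVec_mulVec, dotProduct_smul,
    op_smul_eq_smul, smul_eq_mul]
  change (c ⬝ᵥ x) * (c' ⬝ᵥ x) = (c' ⬝ᵥ x) * (x ⬝ᵥ c)
  rw [dotProduct_comm x c, mul_comm]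

end MvPolynomial

theorem Matrix.sum_mulVec_sq {m n R : Type*} [Fintype m] [Fintype n] [CommRing R]
    (B : Matrix m n R) (w : n → R) : ∑ k, (B *ᵥ w) k ^ 2 = w ⬝ᵥ (Bᵀ * B) *ᵥ w := by
  rw [← mulVec_mulVec, dotProduct_mulVec, vecMul_transpose]
  simp only [dotProduct, sq]

noncomputable def symmetricQuartic (a b c d : ℝ) : MvPolynomial (Fin 3) ℝ :=
  C a * ∑ i : Fin 3, X i ^ 4 +
    C b * ∑ i : Fin 3, ∑ j ∈ Finset.univ.erase i, X i ^ 3 * X j +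
    C c * ∑ i : Fin 3, ∑ j ∈ Finset.Ioi i, X i ^ 2 * X j ^ 2 +
    C d * (X 0 ^ 2 * X 1 * X 2 + X 1 ^ 2 * X 0 * X 2 + X 2 ^ 2 * X 0 * X 1)

theorem eval_symmetricQuartic (a b c d : ℝ) (x : Fin 3 → ℝ) :
    eval x (symmetricQuartic a b c d) =
      a * (x 0 ^ 4 + x 1 ^ 4 + x 2 ^ 4) +
      b * (x 0 ^ 3 * (x 1 + x 2) + x 1 ^ 3 * (x 0 + x 2) + x 2 ^ 3 * (x 0 + x 1)) +
      c * (x 0 ^ 2 * x 1 ^ 2 + x 0 ^ 2 * x 2 ^ 2 + x 1 ^ 2 * x 2 ^ 2) +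
      d * x 0 * x 1 * x 2 * (x 0 + x 1 + x 2) := by
  have hIoi1 : Finset.Ioi (1 : Fin 3) = {2} := by decide
  have hIoi2 : Finset.Ioi (2 : Fin 3) = ∅ := by decide
  simp [symmetricQuartic, Fin.sum_univ_three, Finset.sum_erase_eq_sub, hIoi1, hIoi2]
  ring

theorem isHomogeneous_symmetricQuartic (a b c d : ℝ) :
    (symmetricQuartic a b c d).IsHomogeneous 4 := by
  have h31 : ∀ i j : Fin 3, (X i ^ 3 * X j : MvPolynomial (Fin 3) ℝ).IsHomogeneous 4 :=
    fun i j => (isHomogeneous_X_pow i 3).mul (isHomogeneous_X ℝ j)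
  have h22 : ∀ i j : Fin 3, (X i ^ 2 * X j ^ 2 : MvPolynomial (Fin 3) ℝ).IsHomogeneous 4 :=
    fun i j => (isHomogeneous_X_pow i 2).mul (isHomogeneous_X_pow j 2)
  have h211 : ∀ i j k : Fin 3, (X i ^ 2 * X j * X k : MvPolynomial (Fin 3) ℝ).IsHomogeneous 4 :=
    fun i j k => ((isHomogeneous_X_pow i 2).mul (isHomogeneous_X ℝ j)).mul (isHomogeneous_X ℝ k)
  exact (((IsHomogeneous.sum _ _ _ fun i _ => isHomogeneous_X_pow i 4).C_mul a).add
    ((IsHomogeneous.sum _ _ _ fun i _ => IsHomogeneous.sum _ _ _ fun j _ => h31 i j).C_mul b)).add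
    ((IsHomogeneous.sum _ _ _ fun i _ => IsHomogeneous.sum _ _ _ fun j _ => h22 i j).C_mul c) |>.add
    ((((h211 0 1 2).add (h211 1 0 2)).add (h211 2 0 1)).C_mul d)

/-- Entry `3 + r` is the monomial `x (r + 1) * x (r + 2)`, so that `S₃` permutes the last three
entries as it permutes the first three. -/
def quadMonomials {R : Type*} [CommSemiring R] (x : Fin 3 → R) : Fin 6 → R :=
  ![x 0 ^ 2, x 1 ^ 2, x 2 ^ 2, x 1 * x 2, x 0 * x 2, x 0 * x 1]

theorem MvPolynomial.IsHomogeneous.exists_eval_eq_dotProduct_quadMonomials {R : Type*}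
    [CommSemiring R] {q : MvPolynomial (Fin 3) R} (hq : q.IsHomogeneous 2) :
    ∃ c : Fin 6 → R, ∀ x, eval x q = c ⬝ᵥ quadMonomials x := by
  obtain ⟨S, hS⟩ := hq.exists_eval_eq_dotProduct_mulVec
  refine ⟨![S 0 0, S 1 1, S 2 2, S 1 2 + S 2 1, S 0 2 + S 2 0, S 0 1 + S 1 0], fun x => ?_⟩
  simp [hS, quadMonomials, dotProduct, mulVec, Fin.sum_univ_succ]
  ring

theorem exists_posSemidef_gram_sum_sq {ι : Type*} [Fintype ι]
    {q : ι → MvPolynomial (Fin 3) ℝ} (hq : ∀ i, (q i).IsHomogeneous 2) :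
    ∃ G : Matrix (Fin 6) (Fin 6) ℝ, G.PosSemidef ∧
      ∀ x, eval x (∑ i, q i ^ 2) = quadMonomials x ⬝ᵥ G *ᵥ quadMonomials x := by
  choose c hc using fun i => (hq i).exists_eval_eq_dotProduct_quadMonomials
  refine ⟨(of c)ᵀ * of c, posSemidef_conjTranspose_mul_self (of c), fun x => ?_⟩
  rw [← sum_mulVec_sq]
  simp [hc, mulVec]

def trivialIsotypicBasis : Matrix (Fin 6) (Fin 2) ℝ :=
  !![1, 0; 1, 0; 1, 0; 0, 1; 0, 1; 0, 1]

/-- As `r` varies, column `0` runs through the vectors `e r - e (r + 1)` spanning the copy of the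
standard representation of `S₃` among the squares, and column `1` through their images in the copy
among the mixed monomials. -/
def standardIsotypicBasis : Fin 3 → Matrix (Fin 6) (Fin 2) ℝ
  | 0 => !![1, 0; -1, 0; 0, 0; 0, -1; 0, 1; 0, 0]
  | 1 => !![0, 0; 1, 0; -1, 0; 0, 0; 0, -1; 0, 1]
  | 2 => !![-1, 0; 0, 0; 1, 0; 0, 1; 0, 0; 0, -1]

theorem exists_blocks_posSemidef_of_gram {a b c d : ℝ} {G : Matrix (Fin 6) (Fin 6) ℝ}
    (hG : G.PosSemidef)
    (hf : ∀ x, eval x (symmetricQuartic a b c d) = quadMonomials x ⬝ᵥ G *ᵥ quadMonomials x) :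
    ∃ u v : ℝ,
      (!![a + 2 * u, b + v; b + v, c + d - 2 * u - 2 * v]).PosSemidef ∧
      (!![a - u, b / 2 - v; b / 2 - v, c - d / 2 - 2 * u + v]).PosSemidef := by
  have key := fun x => (eval_symmetricQuartic a b c d x).symm.trans (hf x)
  -- Ten point evaluations give the linear relations between the entries of `G` and `a, b, c, d`.
  have e1 := key ![1, 0, 0]
  have e2 := key ![0, 1, 0]
  have e3 := key ![0, 0, 1]
  have e4 := key ![0, 1, 1]
  have e5 := key ![1, 0, 1]
  have e6 := key ![1, 1, 0]
  have e7 := key ![-1, 0, 1]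
  have e8 := key ![-1, 1, 0]
  have e9 := key ![0, -1, 1]
  have e10 := key ![1, 1, 1]
  simp [quadMonomials, dotProduct, mulVec, Fin.sum_univ_succ] at e1 e2 e3 e4 e5 e6 e7 e8 e9 e10
  have hsym : ∀ i j, G i j = G j i := fun i j => by simpa using hG.1.apply j i
  obtain ⟨u, hu⟩ : ∃ u, u = (G 0 1 + G 1 0 + G 0 2 + G 2 0 + G 1 2 + G 2 1) / 6 := ⟨_, rfl⟩
  obtain ⟨v, hv⟩ : ∃ v, v = (G 0 3 + G 3 0 + G 1 4 + G 4 1 + G 2 5 + G 5 2) / 6 := ⟨_, rfl⟩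
  refine ⟨u, v, ?_, ?_⟩
  · have h : !![a + 2 * u, b + v; b + v, c + d - 2 * u - 2 * v] =
        (1 / 3 : ℝ) • (trivialIsotypicBasisᴴ * G * trivialIsotypicBasis) := by
      ext i j
      fin_cases i <;> fin_cases j <;>
        simp [trivialIsotypicBasis, mul_apply, Fin.sum_univ_succ] <;>
        linarith [hsym 0 3, hsym 0 4, hsym 0 5, hsym 1 3, hsym 1 4, hsym 1 5, hsym 2 3, hsym 2 4,
          hsym 2 5]
    rw [h]
    exact (hG.conjTranspose_mul_mul_same _).smul (by norm_num)
  · have h : !![a - u, b / 2 - v; b / 2 - v, c - d / 2 - 2 * u + v] =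
        (1 / 6 : ℝ) • ∑ r, ((standardIsotypicBasis r)ᴴ * G * standardIsotypicBasis r) := by
      ext i j
      fin_cases i <;> fin_cases j <;>
        simp [standardIsotypicBasis, mul_apply, Fin.sum_univ_succ] <;>
        linarith [hsym 0 3, hsym 0 4, hsym 0 5, hsym 1 3, hsym 1 4, hsym 1 5, hsym 2 3, hsym 2 4,
          hsym 2 5]
    rw [h]
    exact (posSemidef_sum _ fun r _ => hG.conjTranspose_mul_mul_same _).smul (by norm_num)

-- The coefficient vectors of `trivialForms` and `standardForms r` with respect to `quadMonomials`
-- are the columns of `trivialIsotypicBasis` and `standardIsotypicBasis r`.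
noncomputable def trivialForms : Fin 2 → MvPolynomial (Fin 3) ℝ :=
  ![X 0 ^ 2 + X 1 ^ 2 + X 2 ^ 2, X 1 * X 2 + X 0 * X 2 + X 0 * X 1]

noncomputable def standardForms (r : Fin 3) : Fin 2 → MvPolynomial (Fin 3) ℝ :=
  ![X r ^ 2 - X (r + 1) ^ 2, X (r + 2) * (X r - X (r + 1))]

theorem eval_symmetricQuartic_eq_blocks (a b c d u v : ℝ) (x : Fin 3 → ℝ) :
    eval x (symmetricQuartic a b c d) =
      (fun j => eval x (trivialForms j)) ⬝ᵥ
          ((1 / 3 : ℝ) • !![a + 2 * u, b + v; b + v, c + d - 2 * u - 2 * v]) *ᵥ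
            (fun j => eval x (trivialForms j)) +
        ∑ r, (fun j => eval x (standardForms r j)) ⬝ᵥ
          ((1 / 3 : ℝ) • !![a - u, b / 2 - v; b / 2 - v, c - d / 2 - 2 * u + v]) *ᵥ
            (fun j => eval x (standardForms r j)) := by
  simp [eval_symmetricQuartic, trivialForms, standardForms, dotProduct, mulVec, Fin.sum_univ_succ]
  ring

open scoped MatrixOrder in
theorem exists_sum_sq_of_blocks {a b c d u v : ℝ}
    (h₁ : (!![a + 2 * u, b + v; b + v, c + d - 2 * u - 2 * v]).PosSemidef)
    (h₂ : (!![a - u, b / 2 - v; b / 2 - v, c - d / 2 - 2 * u + v]).PosSemidef) :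
    ∃ (k : ℕ) (q : Fin k → MvPolynomial (Fin 3) ℝ), symmetricQuartic a b c d = ∑ i, q i ^ 2 := by
  obtain ⟨B₁, hB₁⟩ :=
    CStarAlgebra.nonneg_iff_eq_star_mul_self.mp (h₁.smul (by norm_num : (0 : ℝ) ≤ 1 / 3)).nonneg
  obtain ⟨B₂, hB₂⟩ :=
    CStarAlgebra.nonneg_iff_eq_star_mul_self.mp (h₂.smul (by norm_num : (0 : ℝ) ≤ 1 / 3)).nonneg
  let q : Fin 2 ⊕ Fin 3 × Fin 2 → MvPolynomial (Fin 3) ℝ :=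
    Sum.elim (fun k => ∑ j, C (B₁ k j) * trivialForms j)
      (fun p => ∑ j, C (B₂ p.2 j) * standardForms p.1 j)
  refine ⟨_, q ∘ (Fintype.equivFin _).symm, MvPolynomial.funext fun x => ?_⟩
  rw [Function.comp_def, Equiv.sum_comp (Fintype.equivFin _).symm (fun i => q i ^ 2),
    eval_symmetricQuartic_eq_blocks a b c d u v x, hB₁, hB₂]
  simp only [star_eq_conjTranspose, conjTranspose_eq_transpose_of_trivial, ← sum_mulVec_sq]
  simp [q, Fintype.sum_sum_type, Fintype.sum_prod_type, mulVec, dotProduct]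

/-- from Theorem 5.4 and §5.1. A symmetric ternary quartic with
coefficients `a, b, c, d` is a sum of squares iff there exist `u = q₁₂`, `v = q₁₆`
making both the trivial-isotypic and standard-isotypic `2×2` blocks positive
semidefinite. -/
theorem stmt_17 (a b c d : ℝ) :
    (∃ (k : ℕ) (q : Fin k → MvPolynomial (Fin 3) ℝ),
      (C a * ∑ i : Fin 3, X i ^ 4 +
        C b * ∑ i : Fin 3, ∑ j ∈ Finset.univ.erase i, X i ^ 3 * X j +
        C c * ∑ i : Fin 3, ∑ j ∈ Finset.Ioi i, X i ^ 2 * X j ^ 2 +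
        C d * (X 0 ^ 2 * X 1 * X 2 + X 1 ^ 2 * X 0 * X 2 + X 2 ^ 2 * X 0 * X 1)) =
        ∑ i : Fin k, q i ^ 2) ↔
    (∃ u v : ℝ,
      (!![a + 2 * u, b + v; b + v, c + d - 2 * u - 2 * v]).PosSemidef ∧
      (!![a - u, b / 2 - v; b / 2 - v, c - d / 2 - 2 * u + v]).PosSemidef) := by
  change (∃ (k : ℕ) (q : Fin k → MvPolynomial (Fin 3) ℝ),
    symmetricQuartic a b c d = ∑ i, q i ^ 2) ↔ _
  constructor
  · rintro ⟨k, q, hf⟩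
    have hq := IsHomogeneous.of_sum_sq (n := 2) (hf ▸ isHomogeneous_symmetricQuartic a b c d)
    obtain ⟨G, hG, hGf⟩ := exists_posSemidef_gram_sum_sq fun i => hq i (Finset.mem_univ i)
    exact exists_blocks_posSemidef_of_gram hG (hf ▸ hGf)
  · rintro ⟨u, v, h₁, h₂⟩
    exact exists_sum_sq_of_blocks h₁ h₂
end
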